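/- There is no linear functional τ on the algebra of all bounded operators containing a fixed unital subalgebra A (closed under an operator P with parametrix Q so that 1-PQ, 1-QP are trace class and ind P ≠ 0) such that τ vanishes on all commutators of elements of A and τ agrees with the operator trace on trace-class elements of A. -/
import Mathlib


/-- there is no linear functional `τ` on the bounded operators
which vanishes on all commutators of elements of a unital subalgebra `A`
(containing an operator `P` with parametrix `Q`, i.e. `1 - PQ` and `1 - QP`
trace class, and `ind P = tr(1-PQ) - tr(1-QP) ≠ 0`) and agrees with the
operator trace on trace-class elements of `A`.  Trace-class operators are
modelled by a submodule `I` on which the trace `tr` is linear. -/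
theorem no_trace_functional_vanishing_on_commutators {H : Type*} [NormedAddCommGroup H]
    [InnerProductSpace ℂ H] [CompleteSpace H]
    (I : Submodule ℂ (H →L[ℂ] H)) (tr : I →ₗ[ℂ] ℂ)
    (A : Subalgebra ℂ (H →L[ℂ] H))
    (P Q : H →L[ℂ] H) (hPA : P ∈ A) (hQA : Q ∈ A)
    (h1 : 1 - P * Q ∈ I) (h2 : 1 - Q * P ∈ I)
    (hind : tr ⟨1 - P * Q, h1⟩ ≠ tr ⟨1 - Q * P, h2⟩) :
    ¬ ∃ τ : (H →L[ℂ] H) →ₗ[ℂ] ℂ,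
        (∀ a ∈ A, ∀ b ∈ A, τ (a * b - b * a) = 0) ∧
        (∀ x : H →L[ℂ] H, ∀ hx : x ∈ I, x ∈ A → τ x = tr ⟨x, hx⟩) := by
  rintro ⟨τ, hcomm, htr⟩
  have hAPQ : 1 - P * Q ∈ A := A.sub_mem A.one_mem (A.mul_mem hPA hQA)
  have hAQP : 1 - Q * P ∈ A := A.sub_mem A.one_mem (A.mul_mem hQA hPA)
  have e1 := htr _ h1 hAPQ
  have e2 := htr _ h2 hAQP
  have hc := hcomm P hPA Q hQA
  apply hind
  rw [← e1, ← e2]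
  have : (1 - P * Q : H →L[ℂ] H) = (1 - Q * P) - (P * Q - Q * P) := by abel
  rw [this, map_sub, hc, sub_zero]
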